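/- (Proposition 1) Let κ ≥ 1 and let π be a probability measure on 𝒳×{−1,1}. Then π satisfies MA(κ) for some constant c₀ > 0 if and only if π satisfies MAH(κ) for some constant c > 0. -/

import Mathlib

open MeasureTheory
open scoped ENNReal NNReal

noncomputable section

namespace AggClass

variable {X : Type*} [MeasurableSpace X]

/-- The sign function, with the convention `sgn 0 = 1`. -/
def sgn (t : ℝ) : ℝ := if 0 ≤ t then 1 else -1

/-- The Bayes rule `f*(x) = sign (2 η x - 1)`. -/
def bayes (η : X → ℝ) : X → ℝ := fun x => sgn (2 * η x - 1)

/-- The hinge risk `A(f) = E[max (1 - Y f(X)) 0]`, as an extended nonnegative real. -/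
def hingeRiskE (π : Measure (X × ℝ)) (f : X → ℝ) : ℝ≥0∞ :=
  ∫⁻ p, ENNReal.ofReal (max (1 - p.2 * f p.1) 0) ∂π

/-- The optimal hinge risk `A* = inf {A(f) : f : X → ℝ measurable}`. -/
def optHingeRiskE (π : Measure (X × ℝ)) : ℝ≥0∞ :=
  ⨅ (f : X → ℝ) (_ : Measurable f), hingeRiskE π f

/-- The hinge risk, real-valued. -/
def hingeRisk (π : Measure (X × ℝ)) (f : X → ℝ) : ℝ := (hingeRiskE π f).toReal

/-- The optimal hinge risk, real-valued. -/
def optHingeRisk (π : Measure (X × ℝ)) : ℝ := (optHingeRiskE π).toReal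

/-- The misclassification risk `R(f) = π (Y ≠ sign (f X))`, ℝ≥0∞-valued. -/
def misRiskE (π : Measure (X × ℝ)) (f : X → ℝ) : ℝ≥0∞ :=
  π {p : X × ℝ | p.2 ≠ sgn (f p.1)}

/-- The misclassification risk, real-valued. -/
def misRisk (π : Measure (X × ℝ)) (f : X → ℝ) : ℝ := (misRiskE π f).toReal

/-- `π` is a joint law of a pair (X,Y) on `X × {-1,1}` with regression function
`η x = π(Y = 1 ∣ X = x)`. -/
structure IsClassif (π : Measure (X × ℝ)) (η : X → ℝ) : Prop where
  labels : π {p : X × ℝ | p.2 = 1 ∨ p.2 = -1}ᶜ = 0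
  meas : Measurable η
  mem01 : ∀ x, η x ∈ Set.Icc (0 : ℝ) 1
  cond : ∀ B : Set X, MeasurableSet B →
    π (B ×ˢ ({1} : Set ℝ)) = ∫⁻ x in B, ENNReal.ofReal (η x) ∂(π.map Prod.fst)

/-- Margin assumption MA(κ) with constant c₀ : for every measurable prediction rule
`f : X → {-1,1}`, `E[|f(X) - f*(X)|] ≤ c₀ (R(f) - R*)^(1/κ)`. -/
def MA (π : Measure (X × ℝ)) (η : X → ℝ) (κ c₀ : ℝ) : Prop :=
  ∀ f : X → ℝ, Measurable f → (∀ x, f x = 1 ∨ f x = -1) →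
    ∫ x, |f x - bayes η x| ∂(π.map Prod.fst)
      ≤ c₀ * (misRisk π f - misRisk π (bayes η)) ^ (1 / κ)

/-- Margin assumption for the hinge risk MAH(κ) with constant c : for every measurable
`f : X → [-1,1]`, `E[|f(X) - f*(X)|] ≤ c (A(f) - A*)^(1/κ)`. -/
def MAH (π : Measure (X × ℝ)) (η : X → ℝ) (κ c : ℝ) : Prop :=
  ∀ f : X → ℝ, Measurable f → (∀ x, f x ∈ Set.Icc (-1 : ℝ) 1) →
    ∫ x, |f x - bayes η x| ∂(π.map Prod.fst)
      ≤ c * (hingeRisk π f - optHingeRisk π) ^ (1 / κ)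

/-- Convex combination of f₁,…,f_M with weights w. -/
def convComb {M : ℕ} (f : Fin M → X → ℝ) (w : Fin M → ℝ) : X → ℝ :=
  fun x => ∑ j, w j * f j x

/-- The set of hinge risks of the elements of the convex hull of f₁,…,f_M. -/
def convRiskSet (π : Measure (X × ℝ)) {M : ℕ} (f : Fin M → X → ℝ) : Set ℝ :=
  {a | ∃ w : Fin M → ℝ, (∀ j, 0 ≤ w j) ∧ (∑ j, w j) = 1 ∧ a = hingeRisk π (convComb f w)}

/-- The law of an i.i.d. sample of size n from π. -/
def sample {α : Type*} [MeasurableSpace α] (π : Measure α) [SigmaFinite π] (n : ℕ) :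
    Measure (Fin n → α) :=
  Measure.pi fun _ => π

/-- The empirical hinge risk on the sample D. -/
def empHinge {n : ℕ} (D : Fin n → X × ℝ) (f : X → ℝ) : ℝ :=
  (n : ℝ)⁻¹ * ∑ i, max (1 - (D i).2 * f (D i).1) 0

/-- The empirical misclassification risk on the sample D. -/
def empMis {n : ℕ} (D : Fin n → X × ℝ) (f : X → ℝ) : ℝ :=
  (n : ℝ)⁻¹ * ∑ i, if (D i).2 ≠ f (D i).1 then (1 : ℝ) else 0

/-- The set of indices minimizing the empirical hinge risk. -/
def ermSet {n M : ℕ} (f : Fin M → X → ℝ) (D : Fin n → X × ℝ) : Finset (Fin M) :=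
  Finset.univ.filter fun j => ∀ k, empHinge D (f j) ≤ empHinge D (f k)

/-- `tf` is an empirical risk minimization (ERM) aggregate for the hinge loss. -/
def IsERM {n M : ℕ} (f : Fin M → X → ℝ) (tf : (Fin n → X × ℝ) → X → ℝ) : Prop :=
  ∀ D, ∃ j ∈ ermSet f D, tf D = f j

/-- `tf` is the averaged ERM (AERM) aggregate for the hinge loss. -/
def IsAERM {n M : ℕ} (f : Fin M → X → ℝ) (tf : (Fin n → X × ℝ) → X → ℝ) : Prop :=
  ∀ D, tf D = fun x => ((ermSet f D).card : ℝ)⁻¹ * ∑ j ∈ ermSet f D, f j x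

/-- The exponential weights for the hinge loss. -/
def aewWeight {n M : ℕ} (f : Fin M → X → ℝ) (D : Fin n → X × ℝ) (j : Fin M) : ℝ :=
  Real.exp (-(n : ℝ) * empHinge D (f j)) / ∑ k, Real.exp (-(n : ℝ) * empHinge D (f k))

/-- `tf` is the aggregation-with-exponential-weights (AEW) aggregate for the hinge loss. -/
def IsAEW {n M : ℕ} (f : Fin M → X → ℝ) (tf : (Fin n → X × ℝ) → X → ℝ) : Prop :=
  ∀ D, tf D = fun x => ∑ j, aewWeight f D j * f j x

/-- Empirical hinge risk on the first k observations of the sample D. -/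
def empHingeK {n : ℕ} (D : Fin n → X × ℝ) (k : ℕ) (f : X → ℝ) : ℝ :=
  (k : ℝ)⁻¹ * ∑ i ∈ Finset.univ.filter (fun i : Fin n => (i : ℕ) < k),
    max (1 - (D i).2 * f (D i).1) 0

/-- The cumulative exponential weights for the hinge loss. -/
def caewWeight {n M : ℕ} (f : Fin M → X → ℝ) (D : Fin n → X × ℝ) (j : Fin M) : ℝ :=
  (n : ℝ)⁻¹ * ∑ k ∈ Finset.Icc 1 n,
    Real.exp (-(k : ℝ) * empHingeK D k (f j)) /
      ∑ l, Real.exp (-(k : ℝ) * empHingeK D k (f l))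

/-! Conditioning on `X`, the hinge risk of `f : X → [-1,1]` is `E[1 - f(X)(2η(X) - 1)]`, so
`A(f) - A* = E[|f - f*| |2η - 1|]`; and for `±1`-valued `g` the hinge loss is twice the `0-1` loss,
so `R(g) - R* = (A(g) - A*) / 2`. Hence MAH(κ) gives MA(κ) directly. Conversely, MA(κ) applied to
`f*` flipped on a set `B` gives `2 P(B) ≤ c₀ E[|2η - 1|; B]^(1/κ)`, which bounds the mass of the
low-margin region `{|2η - 1| ≤ t}` by a power of `t`; splitting `E|f - f*|` along that region,
with `t` a suitable power of `A(f) - A*`, gives MAH(κ). -/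

lemma le_of_two_mul_le_rpow_mul_rpow {p s r : ℝ} (hs : 0 ≤ s) (hr : r ≤ 1)
    (h : 2 * p ≤ s ^ (1 - r) * p ^ r) : p ≤ s := by
  by_contra! hsp
  have hp0 : 0 < p := hs.trans_lt hsp
  have : s ^ (1 - r) * p ^ r ≤ p :=
    calc s ^ (1 - r) * p ^ r ≤ p ^ (1 - r) * p ^ r := by gcongr
      _ = p := by rw [← Real.rpow_add hp0]; simp
  linarith

section MarginTransfer

variable {μ : Measure X} [IsFiniteMeasure μ] {m : X → ℝ}

lemma integral_le_two_mul_measureReal_add (hm : Measurable m) (hm0 : ∀ x, 0 ≤ m x)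
    (hmi : Integrable m μ) {Z : X → ℝ} (hZ : Measurable Z) (hZ0 : ∀ x, 0 ≤ Z x) (hZ2 : ∀ x, Z x ≤ 2)
    {t : ℝ} (ht : 0 < t) :
    ∫ x, Z x ∂μ ≤ 2 * μ.real {x | m x ≤ t} + t⁻¹ * ∫ x, m x * Z x ∂μ := by
  have hB : MeasurableSet {x | m x ≤ t} := hm measurableSet_Iic
  have hZbdd : ∀ x, ‖Z x‖ ≤ 2 := fun x => by
    rw [Real.norm_eq_abs, abs_of_nonneg (hZ0 x)]; exact hZ2 x
  have hmZ : Integrable (fun x => m x * Z x) μ :=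
    hmi.mul_bdd hZ.aestronglyMeasurable (ae_of_all _ hZbdd)
  have hpt : ∀ x, Z x ≤ {x | m x ≤ t}.indicator (fun _ => 2) x + t⁻¹ * (m x * Z x) := by
    intro x
    by_cases hx : m x ≤ t
    · rw [Set.indicator_of_mem (show x ∈ {x | m x ≤ t} from hx)]
      have := mul_nonneg (inv_nonneg.2 ht.le) (mul_nonneg (hm0 x) (hZ0 x))
      linarith [hZ2 x]
    · rw [Set.indicator_of_notMem (show x ∉ {x | m x ≤ t} from hx), zero_add,
        le_inv_mul_iff₀ ht]
      exact mul_le_mul_of_nonneg_right (not_le.1 hx).le (hZ0 x)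
  calc ∫ x, Z x ∂μ
      ≤ ∫ x, ({x | m x ≤ t}.indicator (fun _ => 2) x + t⁻¹ * (m x * Z x)) ∂μ :=
        integral_mono (Integrable.of_bound hZ.aestronglyMeasurable 2 (ae_of_all _ hZbdd))
          (((integrable_const 2).indicator hB).add (hmZ.const_mul _)) hpt
    _ = 2 * μ.real {x | m x ≤ t} + t⁻¹ * ∫ x, m x * Z x ∂μ := by
        rw [integral_add ((integrable_const 2).indicator hB) (hmZ.const_mul _),
          integral_indicator_const _ hB, integral_const_mul, smul_eq_mul, mul_comm]

variable {κ c : ℝ}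

lemma measureReal_le_of_forall_two_mul_measureReal_le (hm : Measurable m)
    (hm0 : ∀ x, 0 ≤ m x) (hmi : Integrable m μ) (hκ : 1 ≤ κ) (hc : 0 < c)
    (H : ∀ B, MeasurableSet B → 2 * μ.real B ≤ c * (∫ x in B, m x ∂μ) ^ (1 / κ))
    {s : ℝ} (hs : 0 < s) :
    μ.real {x | m x ≤ s ^ (κ - 1) / c ^ κ} ≤ s := by
  set t := s ^ (κ - 1) / c ^ κ
  set B := {x | m x ≤ t}
  have hB : MeasurableSet B := hm measurableSet_Iic
  have ht : 0 ≤ t := by positivity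
  have hmB : ∫ x in B, m x ∂μ ≤ t * μ.real B := by
    calc ∫ x in B, m x ∂μ ≤ ∫ _ in B, t ∂μ :=
          setIntegral_mono_on hmi.integrableOn integrableOn_const hB fun x hx => hx
      _ = t * μ.real B := by rw [setIntegral_const, smul_eq_mul, mul_comm]
  have hct : c * t ^ (1 / κ) = s ^ (1 - 1 / κ) := by
    have hκ0 : κ ≠ 0 := by positivity
    rw [Real.div_rpow (by positivity) (by positivity), ← Real.rpow_mul hs.le, one_div,
      Real.rpow_rpow_inv hc.le hκ0, mul_div_cancel₀ _ hc.ne']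
    congr 1
    field_simp
  refine le_of_two_mul_le_rpow_mul_rpow (r := 1 / κ) hs.le (by bound) ?_
  calc 2 * μ.real B ≤ c * (∫ x in B, m x ∂μ) ^ (1 / κ) := H B hB
    _ ≤ c * (t * μ.real B) ^ (1 / κ) := by
        gcongr
        exact setIntegral_nonneg hB fun x _ => hm0 x
    _ = s ^ (1 - 1 / κ) * μ.real B ^ (1 / κ) := by
        rw [Real.mul_rpow ht measureReal_nonneg, ← mul_assoc, hct]

theorem integral_le_of_forall_two_mul_measureReal_le (hm : Measurable m)
    (hm0 : ∀ x, 0 ≤ m x) (hmi : Integrable m μ) (hκ : 1 ≤ κ) (hc : 0 < c)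
    (H : ∀ B, MeasurableSet B → 2 * μ.real B ≤ c * (∫ x in B, m x ∂μ) ^ (1 / κ))
    {Z : X → ℝ} (hZ : Measurable Z) (hZ0 : ∀ x, 0 ≤ Z x) (hZ2 : ∀ x, Z x ≤ 2) :
    ∫ x, Z x ∂μ ≤ (2 + c ^ κ) * (∫ x, m x * Z x ∂μ) ^ (1 / κ) := by
  set a := ∫ x, m x * Z x ∂μ
  have ha : 0 ≤ a := integral_nonneg fun x => mul_nonneg (hm0 x) (hZ0 x)
  have hC : 0 < 2 + c ^ κ := by positivity
  -- letting `s` decrease to `a ^ (1 / κ)` also covers the case `a = 0`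
  suffices key : ∀ s, a ^ (1 / κ) < s → ∫ x, Z x ∂μ ≤ (2 + c ^ κ) * s by
    rw [← div_le_iff₀' hC]
    exact le_of_forall_gt_imp_ge_of_dense fun s hs => (div_le_iff₀' hC).2 (key s hs)
  intro s hs
  have hs0 : 0 < s := (Real.rpow_nonneg ha _).trans_lt hs
  have has : a ≤ s ^ κ :=
    calc a = (a ^ (1 / κ)) ^ κ := by
          rw [one_div, Real.rpow_inv_rpow ha (by positivity)]
      _ ≤ s ^ κ := by gcongr
  set t := s ^ (κ - 1) / c ^ κ
  have ht : 0 < t := by positivity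
  calc ∫ x, Z x ∂μ ≤ 2 * μ.real {x | m x ≤ t} + t⁻¹ * a :=
        integral_le_two_mul_measureReal_add hm hm0 hmi hZ hZ0 hZ2 ht
    _ ≤ 2 * s + t⁻¹ * s ^ κ := by
        gcongr
        exact measureReal_le_of_forall_two_mul_measureReal_le hm hm0 hmi hκ hc H hs0
    _ = (2 + c ^ κ) * s := by
        rw [inv_div, Real.rpow_sub_one hs0.ne']
        field_simp

end MarginTransfer

lemma sgn_eq_one_or_eq_neg_one (t : ℝ) : sgn t = 1 ∨ sgn t = -1 := by
  unfold sgn; split_ifs <;> simp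

lemma sgn_mem_Icc (t : ℝ) : sgn t ∈ Set.Icc (-1 : ℝ) 1 := by
  rcases sgn_eq_one_or_eq_neg_one t with h | h <;> rw [h] <;> norm_num

lemma sgn_mul_self (w : ℝ) : sgn w * w = |w| := by
  unfold sgn
  split_ifs with hw
  · rw [one_mul, abs_of_nonneg hw]
  · rw [neg_one_mul, abs_of_neg (not_le.1 hw)]

lemma abs_sub_sgn_mul_abs {v : ℝ} (hv : v ∈ Set.Icc (-1 : ℝ) 1) (w : ℝ) :
    |v - sgn w| * |w| = (sgn w - v) * w := by
  obtain ⟨hv₁, hv₂⟩ := hv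
  unfold sgn
  split_ifs with hw
  · rw [abs_of_nonpos (by linarith), abs_of_nonneg hw]; ring
  · rw [abs_of_nonneg (by linarith), abs_of_neg (not_le.1 hw)]; ring

lemma measurable_sgn : Measurable sgn :=
  Measurable.ite measurableSet_Ici measurable_const measurable_const

lemma measurable_bayes {η : X → ℝ} (hη : Measurable η) : Measurable (bayes η) :=
  measurable_sgn.comp (by fun_prop)

def condHingeRisk (e v : ℝ) : ℝ := e * max (1 - v) 0 + (1 - e) * max (1 + v) 0

lemma condHingeRisk_of_mem_Icc (e : ℝ) {v : ℝ} (hv : v ∈ Set.Icc (-1 : ℝ) 1) :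
    condHingeRisk e v = 1 - v * (2 * e - 1) := by
  rw [condHingeRisk, max_eq_left (by linarith [hv.2]), max_eq_left (by linarith [hv.1])]
  ring

lemma condHingeRisk_nonneg {e : ℝ} (he : e ∈ Set.Icc (0 : ℝ) 1) (v : ℝ) :
    0 ≤ condHingeRisk e v :=
  add_nonneg (mul_nonneg he.1 (le_max_right _ _))
    (mul_nonneg (by linarith [he.2]) (le_max_right _ _))

lemma condHingeRisk_le_two {e v : ℝ} (he : e ∈ Set.Icc (0 : ℝ) 1) (hv : v ∈ Set.Icc (-1 : ℝ) 1) :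
    condHingeRisk e v ≤ 2 := by
  obtain ⟨he₀, he₁⟩ := he
  obtain ⟨hv₁, hv₂⟩ := hv
  rw [condHingeRisk_of_mem_Icc e ⟨hv₁, hv₂⟩]
  nlinarith

lemma condHingeRisk_sub_condHingeRisk_sgn (e : ℝ) {v : ℝ} (hv : v ∈ Set.Icc (-1 : ℝ) 1) :
    condHingeRisk e v - condHingeRisk e (sgn (2 * e - 1))
      = |v - sgn (2 * e - 1)| * |2 * e - 1| := by
  rw [condHingeRisk_of_mem_Icc e hv, condHingeRisk_of_mem_Icc e (sgn_mem_Icc _),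
    abs_sub_sgn_mul_abs hv]
  ring

lemma condHingeRisk_sgn (e : ℝ) : condHingeRisk e (sgn (2 * e - 1)) = 1 - |2 * e - 1| := by
  rw [condHingeRisk_of_mem_Icc e (sgn_mem_Icc _), sgn_mul_self]

lemma condHingeRisk_sgn_le {e : ℝ} (he : e ∈ Set.Icc (0 : ℝ) 1) (v : ℝ) :
    condHingeRisk e (sgn (2 * e - 1)) ≤ condHingeRisk e v := by
  obtain ⟨he₀, he₁⟩ := he
  have h₁ := neg_abs_le (2 * e - 1)
  have h₂ := le_abs_self (2 * e - 1)
  rw [condHingeRisk_sgn, condHingeRisk]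
  rcases le_total v (-1) with hv | hv
  · rw [max_eq_left (by linarith), max_eq_right (by linarith)]
    nlinarith
  rcases le_total v 1 with hv' | hv'
  · rw [max_eq_left (by linarith), max_eq_left (by linarith)]
    nlinarith [mul_nonneg (sub_nonneg.2 hv') (sub_nonneg.2 h₂),
      mul_nonneg (neg_le_iff_add_nonneg.1 hv) (neg_le_iff_add_nonneg'.1 h₁)]
  · rw [max_eq_right (by linarith), max_eq_left (by linarith)]
    nlinarith

lemma restrict_univ_prod_singleton_eq_map {β : Type*} [MeasurableSpace β]
    {π : Measure (X × β)} {ν : Measure X} {y : β}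
    (h : ∀ A, MeasurableSet A → π (A ×ˢ {y}) = ν A) :
    π.restrict (Set.univ ×ˢ {y}) = ν.map (·, y) := by
  ext s hs
  have hmk : Measurable fun x : X => (x, y) := measurable_prodMk_right
  rw [Measure.restrict_apply hs, Measure.map_apply hmk hs, ← h _ (hmk hs)]
  congr 1
  ext ⟨x, b⟩
  simp +contextual [and_comm]

namespace IsClassif

variable {π : Measure (X × ℝ)} {η : X → ℝ}

lemma ae_label (hπ : IsClassif π η) : ∀ᵐ p ∂π, p.2 = 1 ∨ p.2 = -1 :=
  ae_iff.2 hπ.labels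

lemma measure_prod_one (hπ : IsClassif π η) {A : Set X} (hA : MeasurableSet A) :
    π (A ×ˢ {1}) = (π.map Prod.fst).withDensity (fun x => ENNReal.ofReal (η x)) A := by
  rw [withDensity_apply _ hA, hπ.cond A hA]

lemma measure_prod_neg_one [IsFiniteMeasure π] (hπ : IsClassif π η) {A : Set X}
    (hA : MeasurableSet A) :
    π (A ×ˢ {-1}) = (π.map Prod.fst).withDensity (fun x => ENNReal.ofReal (1 - η x)) A := by
  have hdiff : (A ×ˢ {-1} : Set (X × ℝ)) =ᵐ[π] (A ×ˢ Set.univ \ A ×ˢ {1} : Set (X × ℝ)) := by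
    filter_upwards [hπ.ae_label] with p hp
    change (p ∈ A ×ˢ {-1}) = (p ∈ A ×ˢ Set.univ \ A ×ˢ {1})
    rcases hp with h | h <;> norm_num [Set.mem_prod, h]
  have hηA : ∫⁻ x in A, ENNReal.ofReal (η x) ∂(π.map Prod.fst) ≠ ⊤ := by
    rw [← hπ.cond A hA]; exact measure_ne_top _ _
  rw [measure_congr hdiff, measure_sdiff (Set.prod_mono le_rfl (Set.subset_univ _))
    (hA.prod (measurableSet_singleton _)).nullMeasurableSet (measure_ne_top _ _),
    Set.prod_univ, ← Measure.map_apply measurable_fst hA, hπ.cond A hA, withDensity_apply _ hA,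
    ← setLIntegral_one, ← lintegral_sub hπ.meas.ennreal_ofReal hηA
      (ae_of_all _ fun x => ENNReal.ofReal_le_one.2 (hπ.mem01 x).2)]
  refine lintegral_congr fun x => ?_
  rw [ENNReal.ofReal_sub 1 (hπ.mem01 x).1, ENNReal.ofReal_one]

lemma lintegral_eq [IsFiniteMeasure π] (hπ : IsClassif π η) {h : X × ℝ → ℝ≥0∞}
    (hh : Measurable h) :
    ∫⁻ p, h p ∂π = ∫⁻ x, ENNReal.ofReal (η x) * h (x, 1) ∂(π.map Prod.fst)
      + ∫⁻ x, ENNReal.ofReal (1 - η x) * h (x, -1) ∂(π.map Prod.fst) := by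
  have hlabel : ∀ᵐ p ∂π, p ∈ (Set.univ ×ˢ {1} ∪ Set.univ ×ˢ {-1} : Set (X × ℝ)) := by
    filter_upwards [hπ.ae_label] with p hp
    simpa using hp
  have hdisj : Disjoint (Set.univ ×ˢ {1} : Set (X × ℝ)) (Set.univ ×ˢ {-1}) :=
    Set.disjoint_prod.2 (Or.inr (by norm_num))
  have hpart : ∀ {y : ℝ} {w : X → ℝ}, Measurable w →
      (∀ A, MeasurableSet A → π (A ×ˢ {y}) =
        (π.map Prod.fst).withDensity (fun x => ENNReal.ofReal (w x)) A) →
      ∫⁻ p in Set.univ ×ˢ {y}, h p ∂π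
        = ∫⁻ x, ENNReal.ofReal (w x) * h (x, y) ∂(π.map Prod.fst) := by
    intro y w hw hy
    rw [restrict_univ_prod_singleton_eq_map hy, lintegral_map hh measurable_prodMk_right,
      lintegral_withDensity_eq_lintegral_mul _ hw.ennreal_ofReal
        (g := fun x => h (x, y)) (hh.comp measurable_prodMk_right)]
    rfl
  calc ∫⁻ p, h p ∂π = ∫⁻ p in Set.univ ×ˢ {1} ∪ Set.univ ×ˢ {-1}, h p ∂π := by
        rw [Measure.restrict_eq_self_of_ae_mem hlabel]
    _ = _ := by
        rw [lintegral_union (MeasurableSet.univ.prod (measurableSet_singleton _)) hdisj,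
          hpart hπ.meas fun A hA => hπ.measure_prod_one hA,
          hpart (w := fun x => 1 - η x) (measurable_const.sub hπ.meas)
            fun A hA => hπ.measure_prod_neg_one hA]

lemma hingeRiskE_eq [IsFiniteMeasure π] (hπ : IsClassif π η) {f : X → ℝ} (hf : Measurable f) :
    hingeRiskE π f = ∫⁻ x, ENNReal.ofReal (condHingeRisk (η x) (f x)) ∂(π.map Prod.fst) := by
  have hη := hπ.meas
  rw [hingeRiskE, hπ.lintegral_eq (by fun_prop)]
  simp only [one_mul, neg_one_mul, sub_neg_eq_add]
  rw [← lintegral_add_left (by fun_prop)]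
  refine lintegral_congr fun x => ?_
  obtain ⟨h₀, h₁⟩ := hπ.mem01 x
  rw [condHingeRisk, ENNReal.ofReal_add (by positivity) (mul_nonneg (by linarith) (by positivity)),
    ENNReal.ofReal_mul h₀, ENNReal.ofReal_mul (by linarith)]

lemma hingeRiskE_bayes_le [IsFiniteMeasure π] (hπ : IsClassif π η) {f : X → ℝ}
    (hf : Measurable f) : hingeRiskE π (bayes η) ≤ hingeRiskE π f := by
  rw [hπ.hingeRiskE_eq (measurable_bayes hπ.meas), hπ.hingeRiskE_eq hf]
  exact lintegral_mono fun x => ENNReal.ofReal_le_ofReal (condHingeRisk_sgn_le (hπ.mem01 x) _)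

lemma optHingeRisk_eq [IsFiniteMeasure π] (hπ : IsClassif π η) :
    optHingeRisk π = hingeRisk π (bayes η) :=
  congrArg ENNReal.toReal <| le_antisymm (iInf₂_le _ (measurable_bayes hπ.meas))
    (le_iInf₂ fun _ hf => hπ.hingeRiskE_bayes_le hf)

lemma hingeRisk_eq_integral [IsFiniteMeasure π] (hπ : IsClassif π η) {f : X → ℝ}
    (hf : Measurable f) :
    hingeRisk π f = ∫ x, condHingeRisk (η x) (f x) ∂(π.map Prod.fst) := by
  have hη := hπ.meas
  rw [hingeRisk, hπ.hingeRiskE_eq hf, integral_eq_lintegral_of_nonneg_ae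
    (ae_of_all _ fun x => condHingeRisk_nonneg (hπ.mem01 x) _)
    (by unfold condHingeRisk; fun_prop)]

lemma integrable_condHingeRisk [IsFiniteMeasure π] (hπ : IsClassif π η) {f : X → ℝ}
    (hf : Measurable f) (hb : ∀ x, f x ∈ Set.Icc (-1 : ℝ) 1) :
    Integrable (fun x => condHingeRisk (η x) (f x)) (π.map Prod.fst) := by
  have hη := hπ.meas
  refine Integrable.of_bound (by unfold condHingeRisk; fun_prop) 2 (ae_of_all _ fun x => ?_)
  rw [Real.norm_of_nonneg (condHingeRisk_nonneg (hπ.mem01 x) _)]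
  exact condHingeRisk_le_two (hπ.mem01 x) (hb x)

lemma hingeRisk_sub_optHingeRisk [IsFiniteMeasure π] (hπ : IsClassif π η) {f : X → ℝ}
    (hf : Measurable f) (hb : ∀ x, f x ∈ Set.Icc (-1 : ℝ) 1) :
    hingeRisk π f - optHingeRisk π
      = ∫ x, |f x - bayes η x| * |2 * η x - 1| ∂(π.map Prod.fst) := by
  have hbayes := measurable_bayes hπ.meas
  rw [hπ.optHingeRisk_eq, hπ.hingeRisk_eq_integral hf, hπ.hingeRisk_eq_integral hbayes,
    ← integral_sub (hπ.integrable_condHingeRisk hf hb)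
      (hπ.integrable_condHingeRisk hbayes fun x => sgn_mem_Icc _)]
  exact integral_congr_ae (ae_of_all _ fun x => condHingeRisk_sub_condHingeRisk_sgn _ (hb x))

lemma hingeRiskE_eq_two_mul_misRiskE (hπ : IsClassif π η) {g : X → ℝ} (hg : Measurable g)
    (hpm : ∀ x, g x = 1 ∨ g x = -1) : hingeRiskE π g = 2 * misRiskE π g := by
  have hS : MeasurableSet {p : X × ℝ | p.2 ≠ sgn (g p.1)} :=
    (measurableSet_eq_fun measurable_snd ((measurable_sgn.comp hg).comp measurable_fst)).compl
  rw [misRiskE, ← lintegral_indicator_const hS, hingeRiskE]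
  refine lintegral_congr_ae ?_
  filter_upwards [hπ.ae_label] with p hp
  simp only [Set.indicator_apply]
  rcases hp with h | h <;> rcases hpm p.1 with h' | h' <;> norm_num [h, h', sgn]

lemma misRisk_eq_hingeRisk_div_two (hπ : IsClassif π η) {g : X → ℝ} (hg : Measurable g)
    (hpm : ∀ x, g x = 1 ∨ g x = -1) : misRisk π g = hingeRisk π g / 2 := by
  rw [hingeRisk, hπ.hingeRiskE_eq_two_mul_misRiskE hg hpm, ENNReal.toReal_mul, misRisk]
  norm_num

lemma misRisk_sub_misRisk_bayes [IsFiniteMeasure π] (hπ : IsClassif π η) {g : X → ℝ}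
    (hg : Measurable g) (hpm : ∀ x, g x = 1 ∨ g x = -1) :
    misRisk π g - misRisk π (bayes η) = (hingeRisk π g - optHingeRisk π) / 2 := by
  rw [hπ.misRisk_eq_hingeRisk_div_two hg hpm,
    hπ.misRisk_eq_hingeRisk_div_two (measurable_bayes hπ.meas) fun x => sgn_eq_one_or_eq_neg_one _,
    hπ.optHingeRisk_eq]
  ring

variable {κ : ℝ}

lemma MA_of_MAH [IsFiniteMeasure π] (hπ : IsClassif π η) (hκ : 1 ≤ κ) {c : ℝ} (hc : 0 ≤ c)
    (h : MAH π η κ c) : MA π η κ (2 * c) := by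
  intro g hg hpm
  have hb : ∀ x, g x ∈ Set.Icc (-1 : ℝ) 1 := fun x => by rcases hpm x with h | h <;> norm_num [h]
  have hΔ : hingeRisk π g - optHingeRisk π = 2 * (misRisk π g - misRisk π (bayes η)) := by
    rw [hπ.misRisk_sub_misRisk_bayes hg hpm]; ring
  have hA₀ : 0 ≤ hingeRisk π g - optHingeRisk π := by
    rw [hπ.hingeRisk_sub_optHingeRisk hg hb]; positivity
  set Δ := misRisk π g - misRisk π (bayes η)
  have hΔ₀ : 0 ≤ Δ := by linarith
  calc ∫ x, |g x - bayes η x| ∂(π.map Prod.fst)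
      ≤ c * (2 * Δ) ^ (1 / κ) := hΔ ▸ h g hg hb
    _ = c * 2 ^ (1 / κ) * Δ ^ (1 / κ) := by rw [Real.mul_rpow zero_le_two hΔ₀, mul_assoc]
    _ ≤ c * 2 * Δ ^ (1 / κ) := by
        gcongr
        exact Real.rpow_le_self_of_one_le one_le_two (by bound)
    _ = 2 * c * Δ ^ (1 / κ) := by ring

lemma two_mul_measureReal_le_of_MA [IsFiniteMeasure π] (hπ : IsClassif π η) {c₀ : ℝ}
    (h : MA π η κ c₀) {B : Set X} (hB : MeasurableSet B) :
    2 * (π.map Prod.fst).real B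
      ≤ c₀ * (∫ x in B, |2 * η x - 1| ∂(π.map Prod.fst)) ^ (1 / κ) := by
  classical
  have hbayes := measurable_bayes hπ.meas
  set g := B.piecewise (fun x => -bayes η x) (bayes η)
  have hg : Measurable g := hbayes.neg.piecewise hB hbayes
  have hpm : ∀ x, g x = 1 ∨ g x = -1 := fun x => by
    by_cases hx : x ∈ B <;> rcases sgn_eq_one_or_eq_neg_one (2 * η x - 1) with h | h <;>
      simp [g, hx, bayes, h]
  have hdev : ∀ x, |g x - bayes η x| = B.indicator (fun _ => 2) x := fun x => by
    by_cases hx : x ∈ B <;> rcases sgn_eq_one_or_eq_neg_one (2 * η x - 1) with h | h <;>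
      norm_num [g, hx, bayes, h]
  have hL : ∫ x, |g x - bayes η x| ∂(π.map Prod.fst) = 2 * (π.map Prod.fst).real B := by
    simp_rw [hdev]
    rw [integral_indicator_const _ hB, smul_eq_mul, mul_comm]
  have hR : misRisk π g - misRisk π (bayes η) = ∫ x in B, |2 * η x - 1| ∂(π.map Prod.fst) := by
    have hb : ∀ x, g x ∈ Set.Icc (-1 : ℝ) 1 := fun x => by
      rcases hpm x with h | h <;> norm_num [h]
    rw [hπ.misRisk_sub_misRisk_bayes hg hpm, hπ.hingeRisk_sub_optHingeRisk hg hb]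
    have hpt : ∀ x, |g x - bayes η x| * |2 * η x - 1|
        = B.indicator (fun x => 2 * |2 * η x - 1|) x := fun x => by
      by_cases hx : x ∈ B <;> simp [hdev, hx]
    rw [integral_congr_ae (ae_of_all _ hpt), integral_indicator hB, integral_const_mul]
    ring
  simpa only [hL, hR] using h g hg hpm

lemma MAH_of_MA [IsFiniteMeasure π] (hπ : IsClassif π η) (hκ : 1 ≤ κ) {c₀ : ℝ} (hc₀ : 0 < c₀)
    (h : MA π η κ c₀) : MAH π η κ (2 + c₀ ^ κ) := by
  intro f hf hb
  have hη := hπ.meas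
  have hm : ∀ x, |2 * η x - 1| ≤ 1 := fun x => abs_le.2 ⟨by linarith [(hπ.mem01 x).1],
    by linarith [(hπ.mem01 x).2]⟩
  have hdev : ∀ x, |f x - bayes η x| ≤ 2 := fun x => by
    have hbayes : bayes η x ∈ Set.Icc (-1 : ℝ) 1 := sgn_mem_Icc _
    exact abs_le.2 ⟨by linarith [(hb x).1, hbayes.2], by linarith [(hb x).2, hbayes.1]⟩
  rw [hπ.hingeRisk_sub_optHingeRisk hf hb]
  simp_rw [mul_comm |f _ - bayes η _|]
  exact integral_le_of_forall_two_mul_measureReal_le (by fun_prop) (fun x => abs_nonneg _)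
    (Integrable.of_bound (by fun_prop) 1 (ae_of_all _ fun x => by simpa using hm x)) hκ hc₀
    (fun B hB => hπ.two_mul_measureReal_le_of_MA h hB)
    (by have := measurable_bayes hη; fun_prop) (fun x => abs_nonneg _) hdev

end IsClassif

/-- Proposition 1: MA(κ) (for some c₀ > 0) is equivalent to MAH(κ)
(for some c > 0). -/
theorem MA_iff_MAH
    (π : Measure (X × ℝ)) [IsProbabilityMeasure π] (η : X → ℝ)
    (hπ : IsClassif π η) (κ : ℝ) (hκ : 1 ≤ κ) :
    (∃ c₀ > 0, MA π η κ c₀) ↔ (∃ c > 0, MAH π η κ c) := by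
  constructor
  · rintro ⟨c₀, hc₀, h⟩
    exact ⟨2 + c₀ ^ κ, by positivity, hπ.MAH_of_MA hκ hc₀ h⟩
  · rintro ⟨c, hc, h⟩
    exact ⟨2 * c, by positivity, hπ.MA_of_MAH hκ hc.le h⟩

end AggClass
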